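/- arXiv:2007.07213 — 7 statements merged into one kernel-verified Lean document; each statement's English description precedes it below -/
import Mathlib

section
/- Let x_1 < x_2 < ... < x_m be real numbers and b_1 ≤ b_2 ≤ ... ≤ b_n real numbers, with the convention b_{n+1} = +∞. For 1 ≤ k ≤ n define vectors in ℝ^m: [ξ^b_k]_j = 1 if x_j > b_k and 0 otherwise; [ξ^c_k]_j = x_j − b_k if x_j > b_k and 0 otherwise; [ê^b_k]_j = 1 if b_k < x_j ≤ b_{k+1} and 0 otherwise; [ê^c_k]_j = x_j − μ_k if b_k < x_j ≤ b_{k+1} and 0 otherwise (with ê^c_k = 0 when no x_j lies in (b_k, b_{k+1}]), where μ_k is the mean of {x_j : b_k < x_j ≤ b_{k+1}}. Then span{ξ^b_k, ξ^c_k : 1 ≤ k ≤ n} = span{ê^b_k, ê^c_k : 1 ≤ k ≤ n} as subspaces of ℝ^m. -/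
open scoped Classical

/-- the tail vectors ξ and the cell vectors ê span the same
subspace of ℝ^m. -/
theorem span_tail_eq_span_cell
    (m n : ℕ) (x : Fin m → ℝ) (hx : StrictMono x)
    (b : Fin n → ℝ) (hb : Monotone b)
    (inCell : Fin n → Fin m → Prop)
    (hinCell : ∀ k j, inCell k j ↔
      (b k < x j ∧ ∀ h : (k : ℕ) + 1 < n, x j ≤ b ⟨(k : ℕ) + 1, h⟩))
    (μ : Fin n → ℝ)
    (hμ : ∀ k, μ k =
      (∑ j ∈ Finset.univ.filter (fun j => inCell k j), x j) /
        ((Finset.univ.filter (fun j => inCell k j)).card : ℝ))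
    (ξb ξc eb ec : Fin n → Fin m → ℝ)
    (hξb : ∀ k j, ξb k j = if b k < x j then 1 else 0)
    (hξc : ∀ k j, ξc k j = if b k < x j then x j - b k else 0)
    (heb : ∀ k j, eb k j = if inCell k j then 1 else 0)
    (hec : ∀ k j, ec k j = if inCell k j then x j - μ k else 0) :
    Submodule.span ℝ (Set.range ξb ∪ Set.range ξc) =
      Submodule.span ℝ (Set.range eb ∪ Set.range ec) := by
  set S := Submodule.span ℝ (Set.range eb ∪ Set.range ec) with hS
  set T := Submodule.span ℝ (Set.range ξb ∪ Set.range ξc) with hT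
  have hbb : ∀ (k : Fin n) (h : (k : ℕ) + 1 < n), b k ≤ b ⟨(k : ℕ) + 1, h⟩ := by
    intro k h
    exact hb (by simp [Fin.le_def])
  have hcell : ∀ (k : Fin n) (h : (k : ℕ) + 1 < n) (j : Fin m),
      inCell k j ↔ (b k < x j ∧ x j ≤ b ⟨(k : ℕ) + 1, h⟩) := by
    intro k h j
    rw [hinCell]
    exact ⟨fun ⟨h1, h2⟩ => ⟨h1, h2 h⟩, fun ⟨h1, h2⟩ => ⟨h1, fun _ => h2⟩⟩
  have hcell' : ∀ (k : Fin n) (h : ¬ ((k : ℕ) + 1 < n)) (j : Fin m),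
      inCell k j ↔ b k < x j := by
    intro k h j
    rw [hinCell]
    exact ⟨fun ⟨h1, _⟩ => h1, fun h1 => ⟨h1, fun h' => absurd h' h⟩⟩
  -- identities, case of last cell
  have idb' : ∀ (k : Fin n), ¬ ((k : ℕ) + 1 < n) → ξb k = eb k := by
    intro k h
    funext j
    rw [hξb, heb, hcell' k h]
  have idc' : ∀ (k : Fin n), ¬ ((k : ℕ) + 1 < n) →
      ξc k = ec k + (μ k - b k) • eb k := by
    intro k h
    funext j
    simp only [Pi.add_apply, Pi.smul_apply, smul_eq_mul,
      hξc, hec, heb, hcell' k h]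
    by_cases h0 : b k < x j <;> simp [h0] <;> ring
  -- identities, general case
  have idb : ∀ (k : Fin n) (h : (k : ℕ) + 1 < n),
      ξb k = eb k + ξb ⟨(k : ℕ) + 1, h⟩ := by
    intro k h
    funext j
    simp only [Pi.add_apply, hξb, heb, hcell k h]
    by_cases h1 : b ⟨(k : ℕ) + 1, h⟩ < x j
    · have h0 : b k < x j := lt_of_le_of_lt (hbb k h) h1
      simp [h0, h1, not_le.mpr h1]
    · by_cases h0 : b k < x j <;> simp [h0, h1, not_lt.mp h1]
  have idc : ∀ (k : Fin n) (h : (k : ℕ) + 1 < n),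
      ξc k = ec k + (μ k - b k) • eb k
        + (b ⟨(k : ℕ) + 1, h⟩ - b k) • ξb ⟨(k : ℕ) + 1, h⟩
        + ξc ⟨(k : ℕ) + 1, h⟩ := by
    intro k h
    funext j
    simp only [Pi.add_apply, Pi.smul_apply, smul_eq_mul,
      hξc, hec, heb, hξb, hcell k h]
    by_cases h1 : b ⟨(k : ℕ) + 1, h⟩ < x j
    · have h0 : b k < x j := lt_of_le_of_lt (hbb k h) h1
      simp [h0, h1, not_le.mpr h1]
    · by_cases h0 : b k < x j
      · simp [h0, h1, not_lt.mp h1]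
      · simp [h0, h1]
  -- e's are in S
  have ebS : ∀ k, eb k ∈ S := fun k =>
    Submodule.subset_span (Or.inl ⟨k, rfl⟩)
  have ecS : ∀ k, ec k ∈ S := fun k =>
    Submodule.subset_span (Or.inr ⟨k, rfl⟩)
  -- ξ's are in S, by downward induction
  have key : ∀ d : ℕ, ∀ k : Fin n, n - (k : ℕ) ≤ d + 1 →
      ξb k ∈ S ∧ ξc k ∈ S := by
    intro d
    induction d with
    | zero =>
      intro k hk
      have h : ¬ ((k : ℕ) + 1 < n) := by omega
      refine ⟨?_, ?_⟩
      · rw [idb' k h]; exact ebS k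
      · rw [idc' k h]
        exact Submodule.add_mem S (ecS k) (Submodule.smul_mem S _ (ebS k))
    | succ d ih =>
      intro k hk
      by_cases h : (k : ℕ) + 1 < n
      · have hk' := k.isLt
        obtain ⟨ihb, ihc⟩ := ih ⟨(k : ℕ) + 1, h⟩ (by simp; omega)
        constructor
        · rw [idb k h]
          exact Submodule.add_mem S (ebS k) ihb
        · rw [idc k h]
          exact Submodule.add_mem S (Submodule.add_mem S
            (Submodule.add_mem S (ecS k) (Submodule.smul_mem S _ (ebS k)))
            (Submodule.smul_mem S _ ihb)) ihc
      · refine ⟨?_, ?_⟩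
        · rw [idb' k h]; exact ebS k
        · rw [idc' k h]
          exact Submodule.add_mem S (ecS k) (Submodule.smul_mem S _ (ebS k))
  have ξbS : ∀ k, ξb k ∈ S := fun k => (key n k (by omega)).1
  have ξcS : ∀ k, ξc k ∈ S := fun k => (key n k (by omega)).2
  -- ξ's are in T
  have ξbT : ∀ k, ξb k ∈ T := fun k =>
    Submodule.subset_span (Or.inl ⟨k, rfl⟩)
  have ξcT : ∀ k, ξc k ∈ T := fun k =>
    Submodule.subset_span (Or.inr ⟨k, rfl⟩)
  -- e's are in T
  have ebT : ∀ k, eb k ∈ T := by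
    intro k
    by_cases h : (k : ℕ) + 1 < n
    · have : eb k = ξb k - ξb ⟨(k : ℕ) + 1, h⟩ := by
        rw [idb k h]; abel
      rw [this]
      exact Submodule.sub_mem T (ξbT k) (ξbT _)
    · rw [← idb' k h]; exact ξbT k
  have ecT : ∀ k, ec k ∈ T := by
    intro k
    by_cases h : (k : ℕ) + 1 < n
    · have : ec k = ξc k - (μ k - b k) • eb k
        - (b ⟨(k : ℕ) + 1, h⟩ - b k) • ξb ⟨(k : ℕ) + 1, h⟩
        - ξc ⟨(k : ℕ) + 1, h⟩ := by
        rw [idc k h]; abel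
      rw [this]
      exact Submodule.sub_mem T (Submodule.sub_mem T
        (Submodule.sub_mem T (ξcT k) (Submodule.smul_mem T _ (ebT k)))
        (Submodule.smul_mem T _ (ξbT _))) (ξcT _)
    · have : ec k = ξc k - (μ k - b k) • eb k := by
        rw [idc' k h]; abel
      rw [this]
      exact Submodule.sub_mem T (ξcT k) (Submodule.smul_mem T _ (ebT k))
  apply le_antisymm
  · rw [hT, Submodule.span_le]
    rintro v (⟨k, rfl⟩ | ⟨k, rfl⟩)
    · exact ξbS k
    · exact ξcS k
  · rw [hS, Submodule.span_le]
    rintro v (⟨k, rfl⟩ | ⟨k, rfl⟩)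
    · exact ebT k
    · exact ecT k
end

section
/- Let x_1 < x_2 < ... < x_m be real numbers and b_1 ≤ b_2 ≤ ... ≤ b_n real numbers, with the convention b_{n+1} = +∞. For 1 ≤ k ≤ n define vectors in ℝ^m: [ê^b_k]_j = 1 if b_k < x_j ≤ b_{k+1} and 0 otherwise; [ê^c_k]_j = x_j − μ_k if b_k < x_j ≤ b_{k+1} and 0 otherwise (with ê^c_k = 0 when u_k = 0), where μ_k is the mean of {x_j : b_k < x_j ≤ b_{k+1}} and u_k = #{j : b_k < x_j ≤ b_{k+1}}. Let n̄⁽⁰⁾ = #{k : u_k = 0} and n̄⁽¹⁾ = #{k : u_k = 1}. Then the dimension of span{ê^b_k, ê^c_k : 1 ≤ k ≤ n} equals 2n − 2·n̄⁽⁰⁾ − n̄⁽¹⁾. -/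
open scoped Classical

/-- the dimension of the span of the cell vectors ê equals
`2n - 2·n̄⁽⁰⁾ - n̄⁽¹⁾`. -/
theorem rank_cell_vectors
    (m n : ℕ) (x : Fin m → ℝ) (hx : StrictMono x)
    (b : Fin n → ℝ) (hb : Monotone b)
    (inCell : Fin n → Fin m → Prop)
    (hinCell : ∀ k j, inCell k j ↔
      (b k < x j ∧ ∀ h : (k : ℕ) + 1 < n, x j ≤ b ⟨(k : ℕ) + 1, h⟩))
    (u : Fin n → ℕ)
    (hu : ∀ k, u k = (Finset.univ.filter (fun j => inCell k j)).card)
    (μ : Fin n → ℝ)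
    (hμ : ∀ k, μ k =
      (∑ j ∈ Finset.univ.filter (fun j => inCell k j), x j) / (u k : ℝ))
    (eb ec : Fin n → Fin m → ℝ)
    (heb : ∀ k j, eb k j = if inCell k j then 1 else 0)
    (hec : ∀ k j, ec k j = if inCell k j then x j - μ k else 0) :
    Module.finrank ℝ (Submodule.span ℝ (Set.range eb ∪ Set.range ec)) =
      2 * n - 2 * (Finset.univ.filter (fun k => u k = 0)).card
        - (Finset.univ.filter (fun k => u k = 1)).card := by
  classical
  -- disjointness of cells
  have hdisj : ∀ k k' : Fin n, k ≠ k' → ∀ j, inCell k j → inCell k' j → False := by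
    have key : ∀ k k' : Fin n, k < k' → ∀ j, inCell k j → inCell k' j → False := by
      intro k k' hkk' j h1 h2
      rw [hinCell] at h1 h2
      have hlt : (k : ℕ) + 1 < n := lt_of_le_of_lt hkk' k'.isLt
      have h3 : x j ≤ b ⟨(k : ℕ) + 1, hlt⟩ := h1.2 hlt
      have h4 : b ⟨(k : ℕ) + 1, hlt⟩ ≤ b k' := hb (by simpa [Fin.le_def] using hkk')
      have h5 := h2.1
      linarith
    intro k k' hne j h1 h2
    rcases hne.lt_or_gt with h | h
    · exact key k k' h j h1 h2
    · exact key k' k h j h2 h1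
  have hcell0 : ∀ k, u k = 0 → ∀ j, ¬ inCell k j := by
    intro k hk j hj
    rw [hu] at hk
    have h0 := Finset.card_eq_zero.mp hk
    have hj' : j ∈ Finset.univ.filter (fun j => inCell k j) := by simp [hj]
    simp [h0] at hj'
  have heb0 : ∀ k, u k = 0 → eb k = 0 := by
    intro k hk; funext j; simp [heb, hcell0 k hk j]
  have hec0 : ∀ k, u k = 0 → ec k = 0 := by
    intro k hk; funext j; simp [hec, hcell0 k hk j]
  have hec1 : ∀ k, u k = 1 → ec k = 0 := by
    intro k hk
    obtain ⟨j₀, hj₀⟩ := Finset.card_eq_one.mp ((hu k) ▸ hk)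
    have hμk : μ k = x j₀ := by
      rw [hμ, hj₀, hk]; simp
    funext j
    by_cases hj : inCell k j
    · have hmem : j ∈ Finset.univ.filter (fun j => inCell k j) := by simp [hj]
      rw [hj₀] at hmem
      simp only [Finset.mem_singleton] at hmem
      subst hmem
      simp [hec, hj, hμk]
    · simp [hec, hj]
  -- the selected family
  set T : Finset (Fin n × Bool) :=
    Finset.univ.filter (fun t => if t.2 then 2 ≤ u t.1 else 1 ≤ u t.1) with hT
  set w : Fin n × Bool → (Fin m → ℝ) := fun t => if t.2 then ec t.1 else eb t.1 with hw
  -- linear independence of the selected family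
  have hli : LinearIndependent ℝ (fun t : ↥T => w ↑t) := by
    rw [Fintype.linearIndependent_iff]
    intro g hg t₀
    set G : Fin n × Bool → ℝ := fun t => if h : t ∈ T then g ⟨t, h⟩ else 0 with hG
    have hGg : ∀ t : ↥T, G ↑t = g t := fun t => dif_pos t.2
    have hsumT : ∑ t ∈ T, G t • w t = 0 := by
      rw [← Finset.sum_coe_sort T (fun t => G t • w t)]
      simp only [hGg]
      exact hg
    have hsum' : ∑ t : Fin n × Bool, G t • w t = 0 := by
      rw [← Finset.sum_subset (Finset.subset_univ T)
        (by intro t _ ht; rw [hG]; simp [dif_neg ht])]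
      exact hsumT
    have hsum2 : ∀ j : Fin m,
        ∑ k : Fin n, (G (k, false) * eb k j + G (k, true) * ec k j) = 0 := by
      intro j
      have h := congrFun hsum' j
      rw [Finset.sum_apply] at h
      rw [Fintype.sum_prod_type] at h
      simp only [Fintype.sum_bool, hw, Pi.smul_apply, smul_eq_mul] at h
      simpa [add_comm] using h
    have heval : ∀ k j, inCell k j →
        G (k, false) + G (k, true) * (x j - μ k) = 0 := by
      intro k j hj
      have h := hsum2 j
      rw [Finset.sum_eq_single_of_mem k (Finset.mem_univ k)] at h
      · rw [heb k j, hec k j, if_pos hj, if_pos hj] at h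
        linarith
      · intro k' _ hk'
        have h1 : ¬ inCell k' j := fun hc => hdisj k' k hk' j hc hj
        rw [heb k' j, hec k' j, if_neg h1, if_neg h1]
        ring
    have hmain : ∀ k, G (k, false) = 0 ∧ G (k, true) = 0 := by
      intro k
      rcases Nat.lt_or_ge (u k) 2 with hk2 | hk2
      · -- u k ≤ 1 : G (k, true) = 0 by definition
        have hGt : G (k, true) = 0 := by
          rw [hG]; apply dif_neg
          simp only [hT, Finset.mem_filter, Finset.mem_univ, true_and]
          simp; omega
        rcases Nat.lt_or_ge (u k) 1 with hk1 | hk1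
        · have hGf : G (k, false) = 0 := by
            rw [hG]; apply dif_neg
            simp only [hT, Finset.mem_filter, Finset.mem_univ, true_and]
            simp; omega
          exact ⟨hGf, hGt⟩
        · -- u k = 1 : cell nonempty
          have hpos : 0 < (Finset.univ.filter (fun j => inCell k j)).card := by
            rw [← hu]; omega
          obtain ⟨j, hj⟩ := Finset.card_pos.mp hpos
          have hj' : inCell k j := by simpa using hj
          have h := heval k j hj'
          rw [hGt] at h
          constructor
          · linarith
          · exact hGt
      · -- u k ≥ 2 : two distinct points in the cell
        have hlt : 1 < (Finset.univ.filter (fun j => inCell k j)).card := by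
          rw [← hu]; omega
        obtain ⟨j₁, hj₁, j₂, hj₂, hne⟩ := Finset.one_lt_card.mp hlt
        have hj₁' : inCell k j₁ := by simpa using hj₁
        have hj₂' : inCell k j₂ := by simpa using hj₂
        have e1 := heval k j₁ hj₁'
        have e2 := heval k j₂ hj₂'
        have hxne : x j₁ ≠ x j₂ := fun hc => hne (hx.injective hc)
        have hGt : G (k, true) = 0 := by
          have hsub : G (k, true) * (x j₁ - x j₂) = 0 := by linarith
          rcases mul_eq_zero.mp hsub with h | h
          · exact h
          · exact absurd (sub_eq_zero.mp h) hxne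
        refine ⟨?_, hGt⟩
        rw [hGt] at e1; linarith
    rcases t₀ with ⟨⟨k, s⟩, ht⟩
    rw [← hGg ⟨(k, s), ht⟩]
    cases s
    · exact (hmain k).1
    · exact (hmain k).2
  -- span equality
  have hspan : Submodule.span ℝ (Set.range eb ∪ Set.range ec)
      = Submodule.span ℝ (Set.range (fun t : ↥T => w ↑t)) := by
    have hrange : Set.range (fun t : ↥T => w ↑t) = w '' ↑T := by
      ext f; constructor
      · rintro ⟨⟨t, ht⟩, rfl⟩; exact ⟨t, by simpa using ht, rfl⟩
      · rintro ⟨t, ht, rfl⟩; exact ⟨⟨t, by simpa using ht⟩, rfl⟩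
    rw [hrange]
    apply le_antisymm
    · rw [Submodule.span_le]
      rintro f (⟨k, rfl⟩ | ⟨k, rfl⟩)
      · by_cases hk : 1 ≤ u k
        · apply Submodule.subset_span
          exact ⟨(k, false), by simp [hT, hk], by simp [hw]⟩
        · have hk0 : u k = 0 := by omega
          rw [heb0 k hk0]
          exact (Submodule.span ℝ (w '' ↑T)).zero_mem
      · by_cases hk : 2 ≤ u k
        · apply Submodule.subset_span
          exact ⟨(k, true), by simp [hT, hk], by simp [hw]⟩
        · have hk01 : u k = 0 ∨ u k = 1 := by omega
          rcases hk01 with hk0 | hk1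
          · rw [hec0 k hk0]
            exact (Submodule.span ℝ (w '' ↑T)).zero_mem
          · rw [hec1 k hk1]
            exact (Submodule.span ℝ (w '' ↑T)).zero_mem
    · rw [Submodule.span_le]
      rintro f ⟨⟨k, s⟩, ht, rfl⟩
      apply Submodule.subset_span
      cases s
      · exact Or.inl ⟨k, by simp [hw]⟩
      · exact Or.inr ⟨k, by simp [hw]⟩
  rw [hspan, finrank_span_eq_card hli, Fintype.card_coe]
  -- counting
  set A : Finset (Fin n) := Finset.univ.filter (fun k => 1 ≤ u k) with hA
  set B : Finset (Fin n) := Finset.univ.filter (fun k => 2 ≤ u k) with hB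
  have hTcard : T.card = A.card + B.card := by
    have hdisjAB : Disjoint (A.image (fun k => (k, false)))
        (B.image (fun k => (k, true))) := by
      rw [Finset.disjoint_left]
      rintro ⟨k, s⟩ h1 h2
      simp only [Finset.mem_image] at h1 h2
      obtain ⟨_, _, h1⟩ := h1
      obtain ⟨_, _, h2⟩ := h2
      rw [← h2] at h1
      simp at h1
    have hTeq : T = A.image (fun k => (k, false)) ∪ B.image (fun k => (k, true)) := by
      ext ⟨k, s⟩
      cases s <;> simp [hT, hA, hB]
    rw [hTeq, Finset.card_union_of_disjoint hdisjAB,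
      Finset.card_image_of_injective _ (fun a b hab => by simpa using hab),
      Finset.card_image_of_injective _ (fun a b hab => by simpa using hab)]
  have h1 : (Finset.univ.filter (fun k => u k = 0)).card + A.card = n := by
    have hcompl : Finset.univ.filter (fun k : Fin n => ¬ u k = 0) = A := by
      ext k; simp [hA]; omega
    have := Finset.card_filter_add_card_filter_not
      (s := (Finset.univ : Finset (Fin n))) (p := fun k => u k = 0)
    rw [hcompl] at this
    simpa using this
  have h2 : (Finset.univ.filter (fun k => u k = 1)).card + B.card = A.card := by
    have hc1 : A.filter (fun k => u k = 1) = Finset.univ.filter (fun k => u k = 1) := by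
      ext k; simp [hA]; omega
    have hc2 : A.filter (fun k => ¬ u k = 1) = B := by
      ext k; simp [hA, hB]; omega
    have := Finset.card_filter_add_card_filter_not
      (s := A) (p := fun k => u k = 1)
    rw [hc1, hc2] at this
    exact this
  omega
end

section
/- Let L be the n×n lower triangular matrix with [L]_{ij} = 1 if i ≥ j and 0 otherwise. Let D_c, D_μ, D_b be diagonal n×n matrices with diagonal entries c_i, μ_i, b_i respectively, and suppose |μ_i − b_j| ≤ d for all i ≥ j, where d ≥ 0. Let N be the 2n×2n block matrix N = [[L·D_c, D_μ·L − L·D_b], [0, L]]. Then the ℓ²-operator norm satisfies ‖N‖² ≤ (c_max² + 1 + d²)·n², where c_max = max_{1 ≤ i ≤ n} |c_i|. -/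
open scoped Matrix.Norms.L2Operator

/-! The squared ℓ²-operator norm is at most the squared Frobenius norm, which splits over the
four blocks of `N`. Since `L` is the 0/1 mask of the lower triangle, the entries of the blocks
are `c_j`, `μ_i - b_j`, `0` and `1` on that triangle and vanish above it, so they are bounded by
`cmax`, `d`, `0` and `1`, and each block contributes at most `n²` times the square of its bound. -/

theorem norm_sum_mul_sq_le {𝕜 ι : Type*} [RCLike 𝕜] (s : Finset ι) (a x : ι → 𝕜) :
    ‖∑ j ∈ s, a j * x j‖ ^ 2 ≤ (∑ j ∈ s, ‖a j‖ ^ 2) * ∑ j ∈ s, ‖x j‖ ^ 2 :=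
  calc ‖∑ j ∈ s, a j * x j‖ ^ 2 ≤ (∑ j ∈ s, ‖a j‖ * ‖x j‖) ^ 2 := by
        gcongr
        exact (norm_sum_le _ _).trans_eq (by simp only [norm_mul])
    _ ≤ _ := Finset.sum_mul_sq_le_sq_mul_sq _ _ _

theorem norm_ite_one_zero_mul_le {p : Prop} [Decidable p] {x a : ℝ} (ha : 0 ≤ a)
    (hx : p → ‖x‖ ≤ a) : ‖(if p then 1 else 0) * x‖ ≤ a := by
  split_ifs with h
  · simpa using hx h
  · simpa using ha

namespace Matrix

variable {m n l o : Type*} [Fintype m] [Fintype n]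

theorem l2_opNorm_sq_le_sum_norm_sq {𝕜 : Type*} [RCLike 𝕜] [DecidableEq n] (A : Matrix m n 𝕜) :
    ‖A‖ ^ 2 ≤ ∑ i, ∑ j, ‖A i j‖ ^ 2 := by
  set S := ∑ i, ∑ j, ‖A i j‖ ^ 2
  have hS : 0 ≤ S := by positivity
  suffices ‖A‖ ≤ √S by simpa [Real.sq_sqrt hS] using pow_le_pow_left₀ (norm_nonneg _) this 2
  refine ContinuousLinearMap.opNorm_le_bound _ (Real.sqrt_nonneg S) fun x => ?_
  rw [← pow_le_pow_iff_left₀ (norm_nonneg _) (by positivity) two_ne_zero, mul_pow,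
    Real.sq_sqrt hS, EuclideanSpace.norm_sq_eq, EuclideanSpace.norm_sq_eq, Finset.sum_mul]
  exact Finset.sum_le_sum fun i _ => norm_sum_mul_sq_le _ (A i) x

variable {α : Type*} [SeminormedAddGroup α]

theorem sum_norm_sq_le_of_norm_le (A : Matrix m n α) {a : ℝ} (h : ∀ i j, ‖A i j‖ ≤ a) :
    ∑ i, ∑ j, ‖A i j‖ ^ 2 ≤ Fintype.card m * Fintype.card n * a ^ 2 := by
  calc ∑ i, ∑ j, ‖A i j‖ ^ 2 ≤ ∑ _i : m, ∑ _j : n, a ^ 2 := by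
        gcongr with i _ j _
        exact h i j
    _ = _ := by simp [mul_assoc]

variable [Fintype l] [Fintype o]

theorem sum_norm_sq_fromBlocks (A : Matrix n l α) (B : Matrix n m α) (C : Matrix o l α)
    (D : Matrix o m α) :
    ∑ i, ∑ j, ‖fromBlocks A B C D i j‖ ^ 2 =
      (∑ i, ∑ j, ‖A i j‖ ^ 2) + (∑ i, ∑ j, ‖B i j‖ ^ 2) + (∑ i, ∑ j, ‖C i j‖ ^ 2) +
        ∑ i, ∑ j, ‖D i j‖ ^ 2 := by
  simp only [Fintype.sum_sum_type, fromBlocks_apply₁₁, fromBlocks_apply₁₂, fromBlocks_apply₂₁,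
    fromBlocks_apply₂₂, Finset.sum_add_distrib]
  ring

end Matrix

open Matrix in
/-- upper bound on the squared ℓ²-operator norm of the block
matrix `N = [[L·D_c, D_μ·L − L·D_b], [0, L]]`. -/
theorem l2_opNorm_sq_N_le
    (n : ℕ) (d : ℝ) (hd : 0 ≤ d)
    (c μ b : Fin n → ℝ) (cmax : ℝ)
    (hcmax : IsGreatest (Set.range fun i => |c i|) cmax)
    (hμb : ∀ i j : Fin n, j ≤ i → |μ i - b j| ≤ d)
    (L : Matrix (Fin n) (Fin n) ℝ)
    (hL : ∀ i j, L i j = if j ≤ i then 1 else 0)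
    (N : Matrix (Fin n ⊕ Fin n) (Fin n ⊕ Fin n) ℝ)
    (hN : N = Matrix.fromBlocks
      (L * Matrix.diagonal c)
      (Matrix.diagonal μ * L - L * Matrix.diagonal b)
      0 L) :
    ‖N‖ ^ 2 ≤ (cmax ^ 2 + 1 + d ^ 2) * n ^ 2 := by
  have hcmax₀ : 0 ≤ cmax := by
    obtain ⟨i, hi⟩ := hcmax.1
    exact hi ▸ abs_nonneg _
  have hA : ∀ i j, ‖(L * diagonal c) i j‖ ≤ cmax := fun i j => by
    rw [mul_diagonal, hL]
    exact norm_ite_one_zero_mul_le hcmax₀ fun _ => hcmax.2 ⟨j, rfl⟩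
  have hB : ∀ i j, ‖(diagonal μ * L - L * diagonal b) i j‖ ≤ d := fun i j => by
    rw [Matrix.sub_apply, diagonal_mul, mul_diagonal, hL, ← mul_comm _ (μ i), ← mul_sub_left_distrib]
    exact norm_ite_one_zero_mul_le hd (hμb i j)
  have hL₁ : ∀ i j, ‖L i j‖ ≤ 1 := fun i j => by
    rw [hL]; split_ifs <;> simp
  calc ‖N‖ ^ 2 ≤ ∑ i, ∑ j, ‖N i j‖ ^ 2 := l2_opNorm_sq_le_sum_norm_sq N
    _ ≤ n * n * cmax ^ 2 + n * n * d ^ 2 + n * n * 0 ^ 2 + n * n * 1 ^ 2 := by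
      have h0 : ∀ i j, ‖(0 : Matrix (Fin n) (Fin n) ℝ) i j‖ ≤ 0 := by simp
      rw [hN, sum_norm_sq_fromBlocks]
      simpa only [Fintype.card_fin] using
        add_le_add (add_le_add (add_le_add (sum_norm_sq_le_of_norm_le _ hA)
          (sum_norm_sq_le_of_norm_le _ hB)) (sum_norm_sq_le_of_norm_le _ h0))
          (sum_norm_sq_le_of_norm_le _ hL₁)
    _ = (cmax ^ 2 + 1 + d ^ 2) * n ^ 2 := by ring
end

section
/- Let L be the n×n lower triangular matrix with [L]_{ij} = 1 if i ≥ j and 0 otherwise. Let D_c, D_μ, D_b be diagonal n×n matrices with diagonal entries c_i, μ_i, b_i respectively, where c_i ≠ 0 for all i, and suppose |μ_i − b_j| ≤ d for all i ≥ j, where d ≥ 0. Let N be the 2n×2n block matrix N = [[L·D_c, D_μ·L − L·D_b], [0, L]]. Then N is invertible, N^{-1} = [[D_c^{-1}L^{-1}, −D_c^{-1}L^{-1}(D_μ·L − L·D_b)L^{-1}], [0, L^{-1}]], and the ℓ²-operator norm satisfies ‖N^{-1}‖² ≤ 4·(1 + (1 + 4·d²·n²)/c_min²), where c_min = min_{1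 ≤ i ≤ n} |c_i|. -/
/-!
`N` is block upper triangular, so `N⁻¹ = [[A⁻¹, -A⁻¹ X L⁻¹], [0, L⁻¹]]` with `A = L D_c` and
`X = D_μ L - L D_b`, and the squared operator norm of a 2×2 block matrix is at most the sum of the
squared norms of its blocks. Here `L⁻¹ = 1 - S` with `S` the subdiagonal shift, so `‖L⁻¹‖ ≤ 2`;
`‖D_c⁻¹‖ ≤ 1 / c_min`; and `X` has entries `(μ_i - b_j) [j ≤ i]`, all of modulus at most `d`, so
the Schur test gives `‖X‖ ≤ n d`. Collecting terms,
`‖N⁻¹‖² ≤ 4 / c_min² + 16 n² d² / c_min² + 4`.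
-/

open Matrix WithLp
open scoped Matrix.Norms.L2Operator

namespace Matrix

section L2OpNorm

variable {𝕜 : Type*} [RCLike 𝕜] {l m n p q : Type*} [Fintype l] [Fintype m] [Fintype n]
  [DecidableEq n] [Fintype p] [DecidableEq p] [Fintype q] [DecidableEq q]

theorem l2_opNorm_sq_le_of_sum_norm_sq_le {A : Matrix m n 𝕜} {C : ℝ} (hC : 0 ≤ C)
    (h : ∀ x : n → 𝕜, ∑ i, ‖(A *ᵥ x) i‖ ^ 2 ≤ C * ∑ j, ‖x j‖ ^ 2) : ‖A‖ ^ 2 ≤ C := by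
  refine (Real.le_sqrt (norm_nonneg A) hC).mp ?_
  rw [l2_opNorm_def]
  refine ContinuousLinearMap.opNorm_le_bound _ (Real.sqrt_nonneg C) fun x => ?_
  rw [← sq_le_sq₀ (by positivity) (by positivity), mul_pow, Real.sq_sqrt hC,
    EuclideanSpace.norm_sq_eq, EuclideanSpace.norm_sq_eq]
  exact h x.ofLp

/-- The Schur test. -/
theorem l2_opNorm_sq_le_of_sum_norm_le {A : Matrix m n 𝕜} {r s : ℝ} (hr : 0 ≤ r) (hs : 0 ≤ s)
    (hrow : ∀ i, ∑ j, ‖A i j‖ ≤ r) (hcol : ∀ j, ∑ i, ‖A i j‖ ≤ s) : ‖A‖ ^ 2 ≤ r * s := by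
  refine l2_opNorm_sq_le_of_sum_norm_sq_le (mul_nonneg hr hs) fun x => ?_
  have hrow_cs : ∀ i, ‖(A *ᵥ x) i‖ ^ 2 ≤ r * ∑ j, ‖A i j‖ * ‖x j‖ ^ 2 := fun i => calc
    ‖(A *ᵥ x) i‖ ^ 2 ≤ (∑ j, ‖A i j‖ * ‖x j‖) ^ 2 := by
        gcongr
        exact (norm_sum_le _ _).trans_eq (by simp only [norm_mul])
    _ ≤ (∑ j, ‖A i j‖) * ∑ j, ‖A i j‖ * ‖x j‖ ^ 2 :=
        Finset.sum_sq_le_sum_mul_sum_of_sq_le_mul _ (fun _ _ => norm_nonneg _)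
          (fun _ _ => by positivity) fun _ _ => le_of_eq (by ring)
    _ ≤ r * ∑ j, ‖A i j‖ * ‖x j‖ ^ 2 := by gcongr; exact hrow i
  calc ∑ i, ‖(A *ᵥ x) i‖ ^ 2 ≤ ∑ i, r * ∑ j, ‖A i j‖ * ‖x j‖ ^ 2 := by gcongr; exact hrow_cs _
    _ = r * ∑ j, (∑ i, ‖A i j‖) * ‖x j‖ ^ 2 := by
        rw [← Finset.mul_sum, Finset.sum_comm]; simp only [Finset.sum_mul]
    _ ≤ r * ∑ j, s * ‖x j‖ ^ 2 := by gcongr; exact hcol _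
    _ = r * s * ∑ j, ‖x j‖ ^ 2 := by rw [← Finset.mul_sum, mul_assoc]

theorem l2_opNorm_sq_le_of_norm_le {A : Matrix m n 𝕜} {d : ℝ} (hd : 0 ≤ d)
    (h : ∀ i j, ‖A i j‖ ≤ d) : ‖A‖ ^ 2 ≤ (Fintype.card n * d) * (Fintype.card m * d) := by
  refine l2_opNorm_sq_le_of_sum_norm_le (by positivity) (by positivity) (fun i => ?_) fun j => ?_
  · simpa using Finset.sum_le_sum fun j (_ : j ∈ Finset.univ) => h i j
  · simpa using Finset.sum_le_sum fun i (_ : i ∈ Finset.univ) => h i j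

theorem norm_mulVec_add_mulVec_le (E : Matrix m p 𝕜) (F : Matrix m q 𝕜) (y : p → 𝕜)
    (z : q → 𝕜) :
    ‖toLp 2 (E *ᵥ y + F *ᵥ z)‖ ≤ ‖E‖ * ‖toLp 2 y‖ + ‖F‖ * ‖toLp 2 z‖ := by
  rw [toLp_add]
  exact (norm_add_le _ _).trans
    (add_le_add (E.l2_opNorm_mulVec (toLp 2 y)) (F.l2_opNorm_mulVec (toLp 2 z)))

theorem l2_opNorm_fromBlocks_sq_le (A : Matrix l p 𝕜) (B : Matrix l q 𝕜) (C : Matrix m p 𝕜)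
    (D : Matrix m q 𝕜) :
    ‖fromBlocks A B C D‖ ^ 2 ≤ ‖A‖ ^ 2 + ‖B‖ ^ 2 + ‖C‖ ^ 2 + ‖D‖ ^ 2 := by
  refine l2_opNorm_sq_le_of_sum_norm_sq_le (by positivity) fun x => ?_
  have hx : ∑ j, ‖x j‖ ^ 2 = ‖toLp 2 (x ∘ Sum.inl)‖ ^ 2 + ‖toLp 2 (x ∘ Sum.inr)‖ ^ 2 := by
    simp only [EuclideanSpace.norm_sq_eq, Fintype.sum_sum_type, Function.comp_apply]
  have hMx : ∑ i, ‖(fromBlocks A B C D *ᵥ x) i‖ ^ 2 =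
      ‖toLp 2 (A *ᵥ x ∘ Sum.inl + B *ᵥ x ∘ Sum.inr)‖ ^ 2 +
        ‖toLp 2 (C *ᵥ x ∘ Sum.inl + D *ᵥ x ∘ Sum.inr)‖ ^ 2 := by
    simp only [fromBlocks_mulVec, EuclideanSpace.norm_sq_eq, Fintype.sum_sum_type, Sum.elim_inl,
      Sum.elim_inr]
  have h₁ := norm_mulVec_add_mulVec_le A B (x ∘ Sum.inl) (x ∘ Sum.inr)
  have h₂ := norm_mulVec_add_mulVec_le C D (x ∘ Sum.inl) (x ∘ Sum.inr)
  rw [hMx, hx]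
  set P := ‖toLp 2 (x ∘ Sum.inl)‖
  set Q := ‖toLp 2 (x ∘ Sum.inr)‖
  -- Cauchy–Schwarz, row by row
  have hCS : (‖A‖ * P + ‖B‖ * Q) ^ 2 + (‖C‖ * P + ‖D‖ * Q) ^ 2 ≤
      (‖A‖ ^ 2 + ‖B‖ ^ 2 + ‖C‖ ^ 2 + ‖D‖ ^ 2) * (P ^ 2 + Q ^ 2) := by
    nlinarith [sq_nonneg (‖A‖ * Q - ‖B‖ * P), sq_nonneg (‖C‖ * Q - ‖D‖ * P)]
  have := pow_le_pow_left₀ (norm_nonneg _) h₁ 2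
  have := pow_le_pow_left₀ (norm_nonneg _) h₂ 2
  linarith

theorem l2_opNorm_mul_sq_le (A : Matrix m n 𝕜) (B : Matrix n p 𝕜) :
    ‖A * B‖ ^ 2 ≤ ‖A‖ ^ 2 * ‖B‖ ^ 2 :=
  mul_pow ‖A‖ ‖B‖ 2 ▸ pow_le_pow_left₀ (norm_nonneg _) (l2_opNorm_mul A B) 2

theorem l2_opNorm_inv_diagonal_le {c : n → 𝕜} {r : ℝ} (hr : 0 < r) (hc : ∀ i, r ≤ ‖c i‖) :
    ‖(diagonal c)⁻¹‖ ≤ r⁻¹ := by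
  have hc₀ : ∀ i, c i ≠ 0 := fun i => norm_pos_iff.mp (hr.trans_le (hc i))
  rw [inv_eq_right_inv (B := diagonal c⁻¹) (by simp [hc₀]), l2_opNorm_diagonal]
  refine (pi_norm_le_iff_of_nonneg (inv_nonneg.mpr hr.le)).mpr fun i => ?_
  rw [Pi.inv_apply, norm_inv]
  exact inv_anti₀ hr (hc i)

theorem l2_opNorm_inv_fromBlocks_zero₂₁_sq_le (A : Matrix p p 𝕜) (B : Matrix p q 𝕜)
    (D : Matrix q q 𝕜) (hAD : IsUnit A ↔ IsUnit D) :
    ‖(fromBlocks A B 0 D)⁻¹‖ ^ 2 ≤ ‖A⁻¹‖ ^ 2 + ‖A⁻¹‖ ^ 2 * ‖B‖ ^ 2 * ‖D⁻¹‖ ^ 2 + ‖D⁻¹‖ ^ 2 := by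
  rw [inv_fromBlocks_zero₂₁_of_isUnit_iff A B D hAD]
  refine (l2_opNorm_fromBlocks_sq_le _ _ _ _).trans ?_
  rw [norm_neg, norm_zero, zero_pow two_ne_zero, add_zero]
  grw [l2_opNorm_mul_sq_le, l2_opNorm_mul_sq_le]

end L2OpNorm

def lowerTriangularOnes (n : ℕ) (R : Type*) [Zero R] [One R] : Matrix (Fin n) (Fin n) R :=
  of fun i j => if j ≤ i then 1 else 0

def subdiagonalOnes (n : ℕ) (R : Type*) [Zero R] [One R] : Matrix (Fin n) (Fin n) R :=
  of fun i j => if (j : ℕ) + 1 = i then 1 else 0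

section

variable {n : ℕ} {R : Type*}

theorem subdiagonalOnes_mul_lowerTriangularOnes [NonAssocSemiring R] :
    subdiagonalOnes n R * lowerTriangularOnes n R = of fun i k => if k < i then 1 else 0 := by
  ext i k
  simp only [mul_apply, subdiagonalOnes, lowerTriangularOnes, of_apply, ite_mul, one_mul,
    zero_mul]
  split_ifs with hki
  · rw [Finset.sum_eq_single ⟨(i : ℕ) - 1, by omega⟩]
    · simp only [Fin.le_def, Fin.lt_def] at hki ⊢
      split_ifs <;> first | rfl | omega
    · intro j _ hj
      rw [if_neg fun h => hj (Fin.ext (by simp only; omega))]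
    · simp
  · refine Finset.sum_eq_zero fun j _ => ?_
    split_ifs with h₁ h₂ <;> first | rfl | (simp only [Fin.le_def, Fin.lt_def] at *; omega)

theorem one_sub_subdiagonalOnes_mul_lowerTriangularOnes [NonAssocRing R] :
    (1 - subdiagonalOnes n R) * lowerTriangularOnes n R = 1 := by
  ext i k
  rw [sub_mul, one_mul, subdiagonalOnes_mul_lowerTriangularOnes]
  simp only [sub_apply, lowerTriangularOnes, of_apply, one_apply, Fin.le_def, Fin.lt_def,
    Fin.ext_iff]
  split_ifs <;> first | omega | simp

theorem inv_lowerTriangularOnes [CommRing R] :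
    (lowerTriangularOnes n R)⁻¹ = 1 - subdiagonalOnes n R :=
  inv_eq_left_inv one_sub_subdiagonalOnes_mul_lowerTriangularOnes

theorem isUnit_lowerTriangularOnes [CommRing R] : IsUnit (lowerTriangularOnes n R) :=
  IsUnit.of_mul_eq_one_right _ one_sub_subdiagonalOnes_mul_lowerTriangularOnes

theorem diagonal_mul_lowerTriangularOnes_sub_apply [NonAssocRing R] (μ b : Fin n → R)
    (i j : Fin n) :
    (diagonal μ * lowerTriangularOnes n R - lowerTriangularOnes n R * diagonal b) i j =
      if j ≤ i then μ i - b j else 0 := by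
  simp only [sub_apply, diagonal_mul, mul_diagonal, lowerTriangularOnes, of_apply]
  split_ifs <;> simp

end

section

variable {𝕜 : Type*} [RCLike 𝕜] {n : ℕ}

theorem l2_opNorm_subdiagonalOnes_le : ‖subdiagonalOnes n 𝕜‖ ≤ 1 := by
  have hnorm : ∀ i j, ‖subdiagonalOnes n 𝕜 i j‖ = if (j : ℕ) + 1 = i then 1 else 0 := by
    intro i j
    simp only [subdiagonalOnes, of_apply]
    split_ifs <;> simp
  have hrow : ∀ i, ∑ j, ‖subdiagonalOnes n 𝕜 i j‖ ≤ 1 := fun i => by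
    simp only [hnorm, Finset.sum_boole, Nat.cast_le_one]
    exact Finset.card_le_one.mpr fun j hj j' hj' => Fin.ext (by simp at hj hj'; omega)
  have hcol : ∀ j, ∑ i, ‖subdiagonalOnes n 𝕜 i j‖ ≤ 1 := fun j => by
    simp only [hnorm, Finset.sum_boole, Nat.cast_le_one]
    exact Finset.card_le_one.mpr fun i hi i' hi' => Fin.ext (by simp at hi hi'; omega)
  simpa using l2_opNorm_sq_le_of_sum_norm_le zero_le_one zero_le_one hrow hcol

theorem l2_opNorm_inv_lowerTriangularOnes_le : ‖(lowerTriangularOnes n 𝕜)⁻¹‖ ≤ 2 := by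
  have h1 : ‖(1 : Matrix (Fin n) (Fin n) 𝕜)‖ ≤ 1 := by
    rw [← diagonal_one, l2_opNorm_diagonal]
    exact (pi_norm_le_iff_of_nonneg zero_le_one).mpr fun _ => norm_one.le
  calc ‖(lowerTriangularOnes n 𝕜)⁻¹‖
      ≤ ‖(1 : Matrix (Fin n) (Fin n) 𝕜)‖ + ‖subdiagonalOnes n 𝕜‖ := by
        rw [inv_lowerTriangularOnes]; exact norm_sub_le _ _
    _ ≤ 2 := by linarith [l2_opNorm_subdiagonalOnes_le (𝕜 := 𝕜) (n := n)]

theorem l2_opNorm_sq_diagonal_mul_lowerTriangularOnes_sub_le {μ b : Fin n → 𝕜} {d : ℝ}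
    (hd : 0 ≤ d) (h : ∀ i j, j ≤ i → ‖μ i - b j‖ ≤ d) :
    ‖diagonal μ * lowerTriangularOnes n 𝕜 - lowerTriangularOnes n 𝕜 * diagonal b‖ ^ 2 ≤
      (n * d) ^ 2 := by
  have hentry : ∀ i j,
      ‖(diagonal μ * lowerTriangularOnes n 𝕜 - lowerTriangularOnes n 𝕜 * diagonal b) i j‖ ≤ d :=
    fun i j => by
      rw [diagonal_mul_lowerTriangularOnes_sub_apply]
      split_ifs with hji
      exacts [h i j hji, norm_zero.trans_le hd]
  simpa [sq] using l2_opNorm_sq_le_of_norm_le hd hentry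

end

end Matrix

/-- the block matrix `N = [[L·D_c, D_μ·L − L·D_b], [0, L]]` is
invertible, with explicit block inverse, and the squared ℓ²-operator norm of
its inverse is bounded by `4·(1 + (1 + 4·d²·n²)/c_min²)`. -/
theorem N_invertible_and_l2_opNorm_sq_inv_le
    (n : ℕ) (d : ℝ) (hd : 0 ≤ d)
    (c μ b : Fin n → ℝ) (hc : ∀ i, c i ≠ 0) (cmin : ℝ)
    (hcmin : IsLeast (Set.range fun i => |c i|) cmin)
    (hμb : ∀ i j : Fin n, j ≤ i → |μ i - b j| ≤ d)
    (L : Matrix (Fin n) (Fin n) ℝ)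
    (hL : ∀ i j, L i j = if j ≤ i then 1 else 0)
    (N : Matrix (Fin n ⊕ Fin n) (Fin n ⊕ Fin n) ℝ)
    (hN : N = Matrix.fromBlocks
      (L * Matrix.diagonal c)
      (Matrix.diagonal μ * L - L * Matrix.diagonal b)
      0 L) :
    IsUnit N ∧
    N⁻¹ = Matrix.fromBlocks
      ((Matrix.diagonal c)⁻¹ * L⁻¹)
      (-((Matrix.diagonal c)⁻¹ * L⁻¹ * (Matrix.diagonal μ * L - L * Matrix.diagonal b) * L⁻¹))
      0 L⁻¹ ∧
    ‖N⁻¹‖ ^ 2 ≤ 4 * (1 + (1 + 4 * d ^ 2 * n ^ 2) / cmin ^ 2) := by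
  have hL₁ : L = lowerTriangularOnes n ℝ := ext hL
  subst hN
  obtain ⟨⟨i₀, hi₀⟩, hcmin_le⟩ := hcmin
  have hcmin_pos : 0 < cmin := hi₀ ▸ abs_pos.mpr (hc i₀)
  have hLunit : IsUnit L := hL₁ ▸ isUnit_lowerTriangularOnes
  have hLc : IsUnit (L * diagonal c) :=
    hLunit.mul (isUnit_diagonal.mpr (Pi.isUnit_iff.mpr fun i => (hc i).isUnit))
  have hAD : IsUnit (L * diagonal c) ↔ IsUnit L := iff_of_true hLc hLunit
  have hLinv : ‖L⁻¹‖ ^ 2 ≤ 2 ^ 2 := by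
    gcongr
    exact hL₁ ▸ l2_opNorm_inv_lowerTriangularOnes_le
  have hLcinv : ‖(L * diagonal c)⁻¹‖ ^ 2 ≤ cmin⁻¹ ^ 2 * 2 ^ 2 := by
    grw [Matrix.mul_inv_rev, l2_opNorm_mul_sq_le, hLinv,
      l2_opNorm_inv_diagonal_le hcmin_pos fun i => hcmin_le ⟨i, rfl⟩]
  have hX : ‖diagonal μ * L - L * diagonal b‖ ^ 2 ≤ (n * d) ^ 2 := by
    rw [hL₁]
    exact l2_opNorm_sq_diagonal_mul_lowerTriangularOnes_sub_le hd hμb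
  refine ⟨isUnit_fromBlocks_zero₂₁.mpr ⟨hLc, hLunit⟩,
    Matrix.mul_inv_rev L (diagonal c) ▸ inv_fromBlocks_zero₂₁_of_isUnit_iff _ _ _ hAD, ?_⟩
  calc _ ≤ _ := l2_opNorm_inv_fromBlocks_zero₂₁_sq_le _ _ _ hAD
    _ ≤ cmin⁻¹ ^ 2 * 2 ^ 2 + cmin⁻¹ ^ 2 * 2 ^ 2 * (n * d) ^ 2 * 2 ^ 2 + 2 ^ 2 := by gcongr
    _ = 4 * (1 + (1 + 4 * d ^ 2 * n ^ 2) / cmin ^ 2) := by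
      field_simp
      ring
end

section
/- Let x_1 < x_2 < ... < x_m be real numbers with targets y_1, ..., y_m ∈ ℝ, let b_1 ≤ b_2 ≤ ... ≤ b_n (with convention b_{n+1} = +∞) and c_1, ..., c_n ∈ ℝ with c_j ≠ 0 for all j, and let f(x) = Σ_{i=1}^n c_i·max(x − b_i, 0). Suppose the stationarity conditions with respect to the biases hold: for every 1 ≤ j ≤ n, c_j·Σ_{k=1}^m 𝟙[x_k > b_j]·(f(x_k) − y_k) = 0. Then for every 1 ≤ k ≤ n with u_k ≥ 1, Σ_{i=1}^k c_i·(μ_k − b_i) = ȳ_k; equivalently, f(μ_k) = ȳ_k, so the network interpolates the macroscopic data points (μ_k, ȳ_k). -/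
/-!
Stationarity in `b k` says that the residuals `f (x j) - y j` sum to zero over the tail
`{j | b k < x j}`; subtracting consecutive tails, they sum to zero over each cell. On the closed
cell `[b k, b (k + 1)]` the network is the affine function `∑ i ≤ k, c i * (t - b i)`, so averaging
over the cell gives that function at `μ k` equal to `ȳ k`, and `μ k` lies in that closed cell.
-/

open scoped Classical

open Finset
open scoped BigOperators

section Cells

variable {ι : Type*} [Fintype ι] {n : ℕ}

/-- The cell `U_k`: indices of the data points in `(b k, b (k + 1)]`, with `b n = +∞`. -/
noncomputable def cell (b : Fin n → ℝ) (x : ι → ℝ) (k : Fin n) : Finset ι :=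
  univ.filter fun j => b k < x j ∧ ∀ h : (k : ℕ) + 1 < n, x j ≤ b ⟨k + 1, h⟩

theorem mem_cell {b : Fin n → ℝ} {x : ι → ℝ} {k : Fin n} {j : ι} :
    j ∈ cell b x k ↔ b k < x j ∧ ∀ h : (k : ℕ) + 1 < n, x j ≤ b ⟨k + 1, h⟩ := by
  simp [cell]

theorem sum_cell_eq_zero_of_sum_tail_eq_zero {b : Fin n → ℝ} (hb : Monotone b) (x r : ι → ℝ)
    (htail : ∀ k, ∑ j ∈ univ.filter (fun j => b k < x j), r j = 0) (k : Fin n) :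
    ∑ j ∈ cell b x k, r j = 0 := by
  by_cases hk : (k : ℕ) + 1 < n
  · have hsub : univ.filter (fun j => b ⟨k + 1, hk⟩ < x j) ⊆ univ.filter (fun j => b k < x j) :=
      monotone_filter_right _ fun j _ hj => (hb (Fin.le_def.mpr (Nat.le_succ _))).trans_lt hj
    have hcell : cell b x k = univ.filter (fun j => b k < x j) \
        univ.filter (fun j => b ⟨k + 1, hk⟩ < x j) := by
      ext j
      simp [mem_cell, hk]
    rw [hcell, sum_sdiff_eq_sub hsub, htail, htail, sub_zero]
  · have hcell : cell b x k = univ.filter (fun j => b k < x j) := by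
      ext j
      simp [mem_cell, hk]
    rw [hcell, htail]

end Cells

theorem sum_relu_eq_sum_of_mem_cell {n : ℕ} {b : Fin n → ℝ} (hb : Monotone b) (c : Fin n → ℝ)
    {k : Fin n} {t : ℝ} (hlo : b k ≤ t) (hhi : ∀ h : (k : ℕ) + 1 < n, t ≤ b ⟨k + 1, h⟩) :
    ∑ i, c i * max (t - b i) 0 = ∑ i ∈ univ.filter (· ≤ k), c i * (t - b i) := by
  rw [sum_filter]
  refine sum_congr rfl fun i _ => ?_
  split_ifs with hik
  · rw [max_eq_left (sub_nonneg.mpr ((hb hik).trans hlo))]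
  · have hk : (k : ℕ) + 1 < n := (Nat.succ_le_of_lt (not_le.mp hik)).trans_lt i.isLt
    have hbi : b ⟨k + 1, hk⟩ ≤ b i := hb (Fin.le_def.mpr (Nat.succ_le_of_lt (not_le.mp hik)))
    rw [max_eq_right (sub_nonpos.mpr ((hhi hk).trans hbi)), mul_zero]

theorem expect_sum_mul_sub {ι κ : Type*} {s : Finset ι} (hs : s.Nonempty) (I : Finset κ)
    (c b : κ → ℝ) (x : ι → ℝ) :
    𝔼 j ∈ s, ∑ i ∈ I, c i * (x j - b i) = ∑ i ∈ I, c i * (𝔼 j ∈ s, x j - b i) := by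
  rw [expect_sum_comm]
  refine sum_congr rfl fun i _ => ?_
  rw [← mul_expect, expect_sub_distrib, expect_const hs]

theorem bias_stationarity_interpolates_macroscopic_general
    (m n : ℕ) (x y : Fin m → ℝ)
    (b : Fin n → ℝ) (hb : Monotone b)
    (c : Fin n → ℝ) (hc : ∀ j, c j ≠ 0)
    (f : ℝ → ℝ) (hf : ∀ t, f t = ∑ i, c i * max (t - b i) 0)
    (inCell : Fin n → Fin m → Prop)
    (hinCell : ∀ k j, inCell k j ↔
      (b k < x j ∧ ∀ h : (k : ℕ) + 1 < n, x j ≤ b ⟨(k : ℕ) + 1, h⟩))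
    (u : Fin n → ℕ)
    (hu : ∀ k, u k = (Finset.univ.filter (fun j => inCell k j)).card)
    (μ ybar : Fin n → ℝ)
    (hμ : ∀ k, μ k =
      (∑ j ∈ Finset.univ.filter (fun j => inCell k j), x j) / (u k : ℝ))
    (hybar : ∀ k, ybar k =
      (∑ j ∈ Finset.univ.filter (fun j => inCell k j), y j) / (u k : ℝ))
    (hstat : ∀ j : Fin n,
      c j * ∑ k, (if b j < x k then (1 : ℝ) else 0) * (f (x k) - y k) = 0) :
    ∀ k : Fin n, 1 ≤ u k →
      (∑ i ∈ Finset.univ.filter (fun i : Fin n => i ≤ k), c i * (μ k - b i)) = ybar k ∧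
      f (μ k) = ybar k := by
  intro k hk
  have hU : univ.filter (fun j => inCell k j) = cell b x k := by
    ext j
    simp [mem_cell, hinCell]
  have hne : (cell b x k).Nonempty := card_pos.mp (hU ▸ hu k ▸ hk)
  have hμk : μ k = 𝔼 j ∈ cell b x k, x j := by rw [hμ, hu, hU, expect_eq_sum_div_card]
  have hybark : ybar k = 𝔼 j ∈ cell b x k, y j := by rw [hybar, hu, hU, expect_eq_sum_div_card]
  have htail : ∀ j, ∑ t ∈ univ.filter (fun t => b j < x t), (f (x t) - y t) = 0 := fun j => by
    rw [sum_filter]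
    simpa only [boole_mul, mul_eq_zero, hc j, false_or] using hstat j
  have hfit : ∑ j ∈ cell b x k, f (x j) = ∑ j ∈ cell b x k, y j := by
    rw [← sub_eq_zero, ← sum_sub_distrib]
    exact sum_cell_eq_zero_of_sum_tail_eq_zero hb x _ htail k
  have hlo : b k ≤ μ k := hμk ▸ le_expect hne fun j hj => (mem_cell.mp hj).1.le
  have hhi : ∀ h : (k : ℕ) + 1 < n, μ k ≤ b ⟨k + 1, h⟩ := fun h =>
    hμk ▸ expect_le hne fun j hj => (mem_cell.mp hj).2 h
  have hlinear : ∑ i ∈ univ.filter (· ≤ k), c i * (μ k - b i) = ybar k := by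
    calc _ = 𝔼 j ∈ cell b x k, ∑ i ∈ univ.filter (· ≤ k), c i * (x j - b i) := by
          rw [expect_sum_mul_sub hne, hμk]
      _ = 𝔼 j ∈ cell b x k, f (x j) := expect_congr rfl fun j hj => by
          rw [hf, sum_relu_eq_sum_of_mem_cell hb c (mem_cell.mp hj).1.le (mem_cell.mp hj).2]
      _ = ybar k := by rw [expect_eq_sum_div_card, hfit, ← expect_eq_sum_div_card, hybark]
  exact ⟨hlinear, by rw [hf, sum_relu_eq_sum_of_mem_cell hb c hlo hhi, hlinear]⟩

/-- bias-stationarity implies the network interpolates the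
macroscopic data points `(μ_k, ȳ_k)`. -/
theorem bias_stationarity_interpolates_macroscopic
    (m n : ℕ) (x y : Fin m → ℝ) (hx : StrictMono x)
    (b : Fin n → ℝ) (hb : Monotone b)
    (c : Fin n → ℝ) (hc : ∀ j, c j ≠ 0)
    (f : ℝ → ℝ) (hf : ∀ t, f t = ∑ i, c i * max (t - b i) 0)
    (inCell : Fin n → Fin m → Prop)
    (hinCell : ∀ k j, inCell k j ↔
      (b k < x j ∧ ∀ h : (k : ℕ) + 1 < n, x j ≤ b ⟨(k : ℕ) + 1, h⟩))
    (u : Fin n → ℕ)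
    (hu : ∀ k, u k = (Finset.univ.filter (fun j => inCell k j)).card)
    (μ ybar : Fin n → ℝ)
    (hμ : ∀ k, μ k =
      (∑ j ∈ Finset.univ.filter (fun j => inCell k j), x j) / (u k : ℝ))
    (hybar : ∀ k, ybar k =
      (∑ j ∈ Finset.univ.filter (fun j => inCell k j), y j) / (u k : ℝ))
    (hstat : ∀ j : Fin n,
      c j * ∑ k, (if b j < x k then (1 : ℝ) else 0) * (f (x k) - y k) = 0) :
    ∀ k : Fin n, 1 ≤ u k →
      (∑ i ∈ Finset.univ.filter (fun i : Fin n => i ≤ k), c i * (μ k - b i)) = ybar k ∧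
      f (μ k) = ybar k :=
  bias_stationarity_interpolates_macroscopic_general m n x y b hb c hc f hf inCell hinCell u hu μ
    ybar hμ hybar hstat
end

section
/- Let m = r + p and n = r + q for natural numbers r, p, q. Let Q be an m×m orthogonal matrix (QᵀQ = I), Z an n×n orthogonal matrix (ZᵀZ = I), T an r×r matrix, and T̂ the m×n block matrix [[T, 0], [0, 0]]. Let A = Q·T̂·Zᵀ, let v ∈ ℝ^m, let l ∈ {1, ..., n}, and let Ã = A + v·e_lᵀ, where e_l is the l-th standard basis vector of ℝ^n. For any c ∈ ℝ^n and y ∈ ℝ^m, write Qᵀy = (b⁽¹⁾, b⁽²⁾) with b⁽¹⁾ ∈ ℝ^r, b⁽²⁾ ∈ ℝ^p; Qᵀv = (q⁽¹⁾, q⁽²⁾) with q⁽¹⁾ ∈ ℝ^r, q⁽²⁾ ∈ ℝ^p; and Zᵀc = (x⁽¹⁾, x⁽²⁾) with x⁽¹⁾ ∈ ℝ^r, x⁽²⁾ ∈ ℝ^q. Then ‖Ãc − y‖² = ‖T·x⁽¹⁾ − b⁽¹⁾ + c_l·q⁽¹⁾‖² + ‖c_l·q⁽²⁾ − b⁽²⁾‖²,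 where c_l is the l-th entry of c. -/
open Matrix

lemma sq_sum_mulVec_of_orth {n : Type*} [Fintype n] [DecidableEq n]
    (Q : Matrix n n ℝ) (hQ : Qᵀ * Q = 1) (w : n → ℝ) :
    ∑ i, (Q.mulVec w i) ^ 2 = ∑ i, (w i) ^ 2 := by
  have h1 : ∑ i, (Q.mulVec w i) ^ 2 = Q.mulVec w ⬝ᵥ Q.mulVec w := by
    simp [dotProduct, sq]
  have h2 : Q.mulVec w ⬝ᵥ Q.mulVec w = w ⬝ᵥ w := by
    rw [Matrix.dotProduct_mulVec, ← Matrix.vecMul_transpose, Matrix.vecMul_vecMul,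
      hQ, Matrix.vecMul_one]
  rw [h1, h2]
  simp [dotProduct, sq]

/-- decomposition of the least-squares residual of a rank-one
update of a matrix given by a complete orthogonal decomposition. -/
theorem cod_rankOneUpdate_residual_decomposition
    (r p q : ℕ)
    (Q : Matrix (Fin r ⊕ Fin p) (Fin r ⊕ Fin p) ℝ) (hQ : Qᵀ * Q = 1)
    (Z : Matrix (Fin r ⊕ Fin q) (Fin r ⊕ Fin q) ℝ) (hZ : Zᵀ * Z = 1)
    (T : Matrix (Fin r) (Fin r) ℝ)
    (That : Matrix (Fin r ⊕ Fin p) (Fin r ⊕ Fin q) ℝ)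
    (hThat : That = Matrix.fromBlocks T 0 0 0)
    (A : Matrix (Fin r ⊕ Fin p) (Fin r ⊕ Fin q) ℝ) (hA : A = Q * That * Zᵀ)
    (v : Fin r ⊕ Fin p → ℝ) (l : Fin r ⊕ Fin q)
    (Atil : Matrix (Fin r ⊕ Fin p) (Fin r ⊕ Fin q) ℝ)
    (hAtil : Atil = A + Matrix.vecMulVec v (Pi.single l 1))
    (c : Fin r ⊕ Fin q → ℝ) (y : Fin r ⊕ Fin p → ℝ)
    (bvec qvec : Fin r ⊕ Fin p → ℝ) (xvec : Fin r ⊕ Fin q → ℝ)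
    (hbvec : bvec = Qᵀ.mulVec y)
    (hqvec : qvec = Qᵀ.mulVec v)
    (hxvec : xvec = Zᵀ.mulVec c) :
    ∑ i, ((Atil.mulVec c - y) i) ^ 2 =
      (∑ i : Fin r,
        (T.mulVec (fun s => xvec (Sum.inl s)) i - bvec (Sum.inl i)
          + c l * qvec (Sum.inl i)) ^ 2)
      + ∑ i : Fin p, (c l * qvec (Sum.inr i) - bvec (Sum.inr i)) ^ 2 := by
  have hQQ : Q * Qᵀ = 1 := mul_eq_one_comm.mp hQ
  set w : Fin r ⊕ Fin p → ℝ := That.mulVec xvec + c l • qvec - bvec with hw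
  have hQq : Q.mulVec qvec = v := by
    rw [hqvec, Matrix.mulVec_mulVec, hQQ, Matrix.one_mulVec]
  have hQb : Q.mulVec bvec = y := by
    rw [hbvec, Matrix.mulVec_mulVec, hQQ, Matrix.one_mulVec]
  have hAc : A.mulVec c = Q.mulVec (That.mulVec xvec) := by
    rw [hA, hxvec]
    simp [Matrix.mulVec_mulVec, Matrix.mul_assoc]
  have hrank : (Matrix.vecMulVec v (Pi.single l 1)).mulVec c = c l • v := by
    funext i
    simp only [Matrix.vecMulVec_apply, Matrix.mulVec, dotProduct, mul_assoc,
      ← Finset.mul_sum, Pi.smul_apply, smul_eq_mul]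
    cases l <;> simp [Pi.single_apply] <;> ring
  have key : Atil.mulVec c - y = Q.mulVec w := by
    rw [hw, Matrix.mulVec_sub, Matrix.mulVec_add, Matrix.mulVec_smul,
      hQq, hQb, ← hAc, hAtil, Matrix.add_mulVec, hrank]
  rw [key, sq_sum_mulVec_of_orth Q hQ, Fintype.sum_sum_type]
  congr 1
  · apply Finset.sum_congr rfl
    intro i _
    have h : That.mulVec xvec (Sum.inl i) = T.mulVec (fun s => xvec (Sum.inl s)) i := by
      simp [hThat, Matrix.mulVec, dotProduct, Fintype.sum_sum_type, Matrix.fromBlocks]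
    have : w (Sum.inl i) = T.mulVec (fun s => xvec (Sum.inl s)) i - bvec (Sum.inl i)
        + c l * qvec (Sum.inl i) := by
      simp [hw, h]; ring
    rw [this]
  · apply Finset.sum_congr rfl
    intro i _
    have h : That.mulVec xvec (Sum.inr i) = 0 := by
      simp [hThat, Matrix.mulVec, dotProduct, Fintype.sum_sum_type, Matrix.fromBlocks]
    have : w (Sum.inr i) = c l * qvec (Sum.inr i) - bvec (Sum.inr i) := by
      simp [hw, h, mul_comm]
    rw [this]
end

section
/- Let m = r + p and n = r + q. Let Q be an m×m orthogonal matrix, Z an n×n orthogonal matrix with column blocks Z = [Z_r | Z̃] (Z_r consisting of the first r columns), T an invertible r×r matrix, and T̂ the m×n block matrix [[T, 0], [0, 0]]. Let A = Q·T̂·Zᵀ, v ∈ ℝ^m, l ∈ {1, ..., n}, Ã = A + v·e_lᵀ, and y ∈ ℝ^m. Write Qᵀy = (b⁽¹⁾, b⁽²⁾) and Qᵀv = (q⁽¹⁾, q⁽²⁾) with first blocks in ℝ^r. Assume q⁽²⁾ ≠ 0 and that the l-th row Z̃_{l,:} of Z̃ is nonzero. Define d_l* = ⟨b⁽²⁾,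 q⁽²⁾⟩/‖q⁽²⁾‖², x*⁽¹⁾ = T^{-1}(b⁽¹⁾ − d_l*·q⁽¹⁾), x*⁽²⁾ = ((d_l* − (Z_r·x*⁽¹⁾)_l)/‖Z̃_{l,:}‖²)·(Z̃_{l,:})ᵀ, and c* = Z_r·x*⁽¹⁾ + Z̃·x*⁽²⁾. Then c* is a global minimizer of the least-squares problem: for every c ∈ ℝ^n, ‖Ã·c* − y‖² ≤ ‖Ã·c − y‖². -/
open Matrix

private lemma scalar_ls {ι : Type*} [Fintype ι] (qv bv : ι → ℝ)
    (hN : 0 < ∑ i, (qv i) ^ 2) (d : ℝ) :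
    ∑ i, ((∑ i, bv i * qv i) / (∑ i, (qv i) ^ 2) * qv i - bv i) ^ 2
      ≤ ∑ i, (d * qv i - bv i) ^ 2 := by
  set N := ∑ i, (qv i) ^ 2 with hNdef
  set B := ∑ i, bv i * qv i with hBdef
  have expand : ∀ e : ℝ, ∑ i, (e * qv i - bv i) ^ 2
      = e ^ 2 * N - 2 * e * B + ∑ i, (bv i) ^ 2 := by
    intro e
    rw [hNdef, hBdef, Finset.mul_sum, Finset.mul_sum, ← Finset.sum_sub_distrib,
      ← Finset.sum_add_distrib]
    exact Finset.sum_congr rfl fun i _ => by ring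
  rw [expand, expand]
  have hN0 : N ≠ 0 := ne_of_gt hN
  have key : 0 ≤ (d ^ 2 * N - 2 * d * B) - ((B / N) ^ 2 * N - 2 * (B / N) * B) := by
    have h : (d ^ 2 * N - 2 * d * B) - ((B / N) ^ 2 * N - 2 * (B / N) * B)
        = (d * N - B) ^ 2 / N := by field_simp; ring
    rw [h]; positivity
  linarith

/-- explicit global minimizer of the least-squares problem for a
rank-one column update of a matrix given by a complete orthogonal
decomposition. -/
theorem cod_rankOneUpdate_leastSquares_minimizer
    (r p q : ℕ)
    (Q : Matrix (Fin r ⊕ Fin p) (Fin r ⊕ Fin p) ℝ) (hQ : Qᵀ * Q = 1)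
    (Z : Matrix (Fin r ⊕ Fin q) (Fin r ⊕ Fin q) ℝ) (hZ : Zᵀ * Z = 1)
    (T : Matrix (Fin r) (Fin r) ℝ) (hT : IsUnit T)
    (That : Matrix (Fin r ⊕ Fin p) (Fin r ⊕ Fin q) ℝ)
    (hThat : That = Matrix.fromBlocks T 0 0 0)
    (A : Matrix (Fin r ⊕ Fin p) (Fin r ⊕ Fin q) ℝ) (hA : A = Q * That * Zᵀ)
    (v : Fin r ⊕ Fin p → ℝ) (l : Fin r ⊕ Fin q)
    (Atil : Matrix (Fin r ⊕ Fin p) (Fin r ⊕ Fin q) ℝ)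
    (hAtil : Atil = A + Matrix.vecMulVec v (Pi.single l 1))
    (y : Fin r ⊕ Fin p → ℝ)
    (bvec qvec : Fin r ⊕ Fin p → ℝ)
    (hbvec : bvec = Qᵀ.mulVec y)
    (hqvec : qvec = Qᵀ.mulVec v)
    (hq2 : (fun i : Fin p => qvec (Sum.inr i)) ≠ 0)
    (hZtilRow : (fun j : Fin q => Z l (Sum.inr j)) ≠ 0)
    (dstar : ℝ)
    (hdstar : dstar = (∑ i : Fin p, bvec (Sum.inr i) * qvec (Sum.inr i)) /
      (∑ i : Fin p, (qvec (Sum.inr i)) ^ 2))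
    (xstar1 : Fin r → ℝ)
    (hxstar1 : xstar1 = T⁻¹.mulVec (fun i => bvec (Sum.inl i) - dstar * qvec (Sum.inl i)))
    (xstar2 : Fin q → ℝ)
    (hxstar2 : xstar2 = fun j =>
      ((dstar - ∑ s : Fin r, Z l (Sum.inl s) * xstar1 s) /
        (∑ j' : Fin q, (Z l (Sum.inr j')) ^ 2)) * Z l (Sum.inr j))
    (cstar : Fin r ⊕ Fin q → ℝ)
    (hcstar : cstar = Z.mulVec (Sum.elim xstar1 xstar2)) :
    ∀ c : Fin r ⊕ Fin q → ℝ,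
      ∑ i, ((Atil.mulVec cstar - y) i) ^ 2 ≤ ∑ i, ((Atil.mulVec c - y) i) ^ 2 := by
  intro c
  have hQQt : Q * Qᵀ = 1 := mul_eq_one_comm.mp hQ
  -- positivity of the norms
  have hNq : 0 < ∑ i : Fin p, (qvec (Sum.inr i)) ^ 2 := by
    obtain ⟨i, hi⟩ := Function.ne_iff.mp hq2
    simp only [Pi.zero_apply] at hi
    exact Finset.sum_pos' (fun j _ => sq_nonneg _)
      ⟨i, Finset.mem_univ i, by positivity⟩
  have hNz : 0 < ∑ j : Fin q, (Z l (Sum.inr j)) ^ 2 := by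
    obtain ⟨j, hj⟩ := Function.ne_iff.mp hZtilRow
    simp only [Pi.zero_apply] at hj
    exact Finset.sum_pos' (fun j' _ => sq_nonneg _)
      ⟨j, Finset.mem_univ j, by positivity⟩
  -- norm invariance under Qᵀ
  have norm_inv : ∀ w : Fin r ⊕ Fin p → ℝ,
      ∑ i, (w i) ^ 2 = ∑ i, ((Qᵀ.mulVec w) i) ^ 2 := by
    intro w
    have h1 : ∑ i, ((Qᵀ.mulVec w) i) ^ 2 = (Qᵀ.mulVec w) ⬝ᵥ (Qᵀ.mulVec w) := by
      simp [dotProduct, sq]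
    have h2 : (Qᵀ.mulVec w) ⬝ᵥ (Qᵀ.mulVec w) = w ⬝ᵥ w := by
      rw [dotProduct_mulVec, mulVec_transpose, vecMul_vecMul, hQQt, vecMul_one]
    rw [h1, h2]; simp [dotProduct, sq]
  -- structure of Qᵀ (Atil c - y)
  have key : ∀ c' : Fin r ⊕ Fin q → ℝ,
      Qᵀ.mulVec (Atil.mulVec c' - y)
        = Sum.elim (T.mulVec ((Zᵀ.mulVec c') ∘ Sum.inl)) 0 + c' l • qvec - bvec := by
    intro c'
    have hsingle : (Pi.single l (1:ℝ)) ⬝ᵥ c' = c' l := by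
      simp [dotProduct, Pi.single_apply]
    have hrank1 : (Matrix.vecMulVec v (Pi.single l 1)).mulVec c' = c' l • v := by
      funext i
      simp only [mulVec, vecMulVec_apply, dotProduct, Pi.smul_apply, smul_eq_mul]
      rw [← hsingle, dotProduct, Finset.sum_mul]
      exact Finset.sum_congr rfl fun j _ => by ring
    have hAc : Qᵀ.mulVec (A.mulVec c') = That.mulVec (Zᵀ.mulVec c') := by
      rw [hA, mulVec_mulVec, ← Matrix.mul_assoc, ← Matrix.mul_assoc, hQ, Matrix.one_mul,
        ← mulVec_mulVec]
    have hblock : That.mulVec (Zᵀ.mulVec c')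
        = Sum.elim (T.mulVec ((Zᵀ.mulVec c') ∘ Sum.inl)) 0 := by
      rw [hThat, fromBlocks_mulVec]
      simp
    calc Qᵀ.mulVec (Atil.mulVec c' - y)
        = Qᵀ.mulVec (A.mulVec c') + Qᵀ.mulVec ((Matrix.vecMulVec v (Pi.single l 1)).mulVec c')
          - Qᵀ.mulVec y := by
          rw [hAtil, mulVec_sub, Matrix.add_mulVec, mulVec_add]
      _ = Sum.elim (T.mulVec ((Zᵀ.mulVec c') ∘ Sum.inl)) 0 + c' l • qvec - bvec := by
          rw [hAc, hblock, hrank1, mulVec_smul, ← hqvec, ← hbvec]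
  -- objective in block form
  have obj : ∀ c' : Fin r ⊕ Fin q → ℝ,
      ∑ i, ((Atil.mulVec c' - y) i) ^ 2
        = (∑ s : Fin r, (T.mulVec ((Zᵀ.mulVec c') ∘ Sum.inl) s
              + c' l * qvec (Sum.inl s) - bvec (Sum.inl s)) ^ 2)
          + ∑ i : Fin p, (c' l * qvec (Sum.inr i) - bvec (Sum.inr i)) ^ 2 := by
    intro c'
    rw [norm_inv, key c', Fintype.sum_sum_type]
    simp [smul_eq_mul]
  rw [obj cstar, obj c]
  -- facts about cstar
  have hZtZ : Zᵀ.mulVec cstar = Sum.elim xstar1 xstar2 := by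
    rw [hcstar, mulVec_mulVec, hZ, one_mulVec]
  have hcl : cstar l = dstar := by
    have h1 : cstar l = ∑ j, Z l j * Sum.elim xstar1 xstar2 j := by
      rw [hcstar]; simp [mulVec, dotProduct]
    rw [h1, Fintype.sum_sum_type]
    simp only [Sum.elim_inl, Sum.elim_inr]
    have h2 : ∑ j : Fin q, Z l (Sum.inr j) * xstar2 j
        = dstar - ∑ s : Fin r, Z l (Sum.inl s) * xstar1 s := by
      rw [hxstar2]
      have : ∑ j : Fin q, Z l (Sum.inr j)
          * ((dstar - ∑ s : Fin r, Z l (Sum.inl s) * xstar1 s) /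
            (∑ j' : Fin q, (Z l (Sum.inr j')) ^ 2) * Z l (Sum.inr j))
          = (dstar - ∑ s : Fin r, Z l (Sum.inl s) * xstar1 s) /
            (∑ j' : Fin q, (Z l (Sum.inr j')) ^ 2) * ∑ j : Fin q, (Z l (Sum.inr j)) ^ 2 := by
        rw [Finset.mul_sum]
        exact Finset.sum_congr rfl fun j _ => by ring
      rw [this, div_mul_cancel₀]
      exact ne_of_gt hNz
    rw [h2]; ring
  have hTx : T.mulVec xstar1 = fun s => bvec (Sum.inl s) - dstar * qvec (Sum.inl s) := by
    rw [hxstar1, mulVec_mulVec, Matrix.mul_nonsing_inv _ ((Matrix.isUnit_iff_isUnit_det T).mp hT),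
      one_mulVec]
  have hblock1 : ∀ s : Fin r,
      T.mulVec ((Zᵀ.mulVec cstar) ∘ Sum.inl) s + cstar l * qvec (Sum.inl s) - bvec (Sum.inl s)
        = 0 := by
    intro s
    have : (Zᵀ.mulVec cstar) ∘ Sum.inl = xstar1 := by
      funext t; simp [hZtZ]
    rw [this, hTx, hcl]
    simp
  have hleft : (∑ s : Fin r, (T.mulVec ((Zᵀ.mulVec cstar) ∘ Sum.inl) s
        + cstar l * qvec (Sum.inl s) - bvec (Sum.inl s)) ^ 2) = 0 := by
    apply Finset.sum_eq_zero
    intro s _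
    rw [hblock1 s]; ring
  rw [hleft, hcl, zero_add]
  have hmin : ∑ i : Fin p, (dstar * qvec (Sum.inr i) - bvec (Sum.inr i)) ^ 2
      ≤ ∑ i : Fin p, (c l * qvec (Sum.inr i) - bvec (Sum.inr i)) ^ 2 := by
    rw [hdstar]
    exact scalar_ls (fun i => qvec (Sum.inr i)) (fun i => bvec (Sum.inr i)) hNq (c l)
  have hnonneg : 0 ≤ ∑ s : Fin r, (T.mulVec ((Zᵀ.mulVec c) ∘ Sum.inl) s
      + c l * qvec (Sum.inl s) - bvec (Sum.inl s)) ^ 2 :=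
    Finset.sum_nonneg fun s _ => sq_nonneg _
  linarith
end
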